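/- arXiv:2011.09731 — 3 statements merged into one kernel-verified Lean document; each statement's English description precedes it below -/
import Mathlib

section
/- Let α, β, a, b, c, d, p, q, r ∈ ℝ satisfy: αa + βb + p = 0, αb + βc + q = 0, and 6αp + 6βq + r = 0. Then 12·p·q·a·b − 6p²b² − 6q²a² + (r·a − 6p²)(c·a − b²) = 0. -/
/-!
Multiplying the first two equations by the adjugate of the Gram matrix `[[a, b], [b, c]]`
(Cramer's rule without division) expresses `α (ac - b²)` and `β (ac - b²)` through `p, q`.
Multiplying the third equation by `ac - b²` then eliminates `α, β` and gives
`r (ac - b²) = 6 (c p² - 2 b p q + a q²)`; the claimed relation is `a` times this one.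
-/

section Elimination

variable {R : Type*} [CommRing R] {α β a b c p q r : R}

theorem mul_det_eq_of_linear_system (h1 : α * a + β * b + p = 0) (h2 : α * b + β * c + q = 0) :
    α * (a * c - b ^ 2) = b * q - c * p ∧ β * (a * c - b ^ 2) = b * p - a * q :=
  ⟨by linear_combination c * h1 - b * h2, by linear_combination a * h2 - b * h1⟩

theorem mul_det_eq_adjugate_form (h1 : α * a + β * b + p = 0) (h2 : α * b + β * c + q = 0)
    (h3 : 6 * α * p + 6 * β * q + r = 0) :
    r * (a * c - b ^ 2) = 6 * (c * p ^ 2 - 2 * b * p * q + a * q ^ 2) := by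
  obtain ⟨hα, hβ⟩ := mul_det_eq_of_linear_system h1 h2
  linear_combination (a * c - b ^ 2) * h3 - 6 * p * hα - 6 * q * hβ

end Elimination

theorem gauss_elimination_psi3_general
    (α β a b c p q r : ℝ)
    (h1 : α * a + β * b + p = 0)
    (h2 : α * b + β * c + q = 0)
    (h3 : 6 * α * p + 6 * β * q + r = 0) :
    12 * p * q * a * b - 6 * p ^ 2 * b ^ 2 - 6 * q ^ 2 * a ^ 2
      + (r * a - 6 * p ^ 2) * (c * a - b ^ 2) = 0 := by
  linear_combination a * mul_det_eq_adjugate_form h1 h2 h3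

/-- Elimination of the parameters `α, β` in the system defining `Ψ₃(5)`:
if `αa + βb + p = 0`, `αb + βc + q = 0` and `6αp + 6βq + r = 0`, then
`12·p·q·a·b − 6p²b² − 6q²a² + (r·a − 6p²)(c·a − b²) = 0`. -/
theorem gauss_elimination_psi3
    (α β a b c d p q r : ℝ)
    (h1 : α * a + β * b + p = 0)
    (h2 : α * b + β * c + q = 0)
    (h3 : 6 * α * p + 6 * β * q + r = 0) :
    12 * p * q * a * b - 6 * p ^ 2 * b ^ 2 - 6 * q ^ 2 * a ^ 2
      + (r * a - 6 * p ^ 2) * (c * a - b ^ 2) = 0 :=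
  gauss_elimination_psi3_general α β a b c p q r h1 h2 h3
end

section
/- For the function h(I₁,I₂,I₃,I₄) = I₂⁵/5 + I₁³/3 − I₁²/2 + I₁I₂/2 − I₃²/2 − I₄, the gradient at the origin is nonzero, and h is five-jet non-degenerate at the origin: the only vector v ∈ ℝ⁴ satisfying h¹[v] = 0, h²[v,v] = 0, h³[v,v,v] = 0, h⁴[v,v,v,v] = 0, and h⁵[v,v,v,v,v] = 0 is v = 0. -/
/-!
Restricted to the line through `v`, `h` is the polynomial
`t ↦ (v₁⁵/5) t⁵ + (v₀³/3) t³ + (v₀v₁/2 − v₀²/2 − v₂²/2) t² − v₃ t`, and the `k`-th jet of `h` at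
the origin evaluated on `v` is `k!` times its `t^k` coefficient. The first, third and fifth jets
force `v₃ = v₀ = v₁ = 0`, after which the second jet reduces to `−v₂² = 0`.
-/

/-- The function `h(I) = I₂⁵/5 + I₁³/3 − I₁²/2 + I₁I₂/2 − I₃²/2 − I₄`. -/
noncomputable def h : (Fin 4 → ℝ) → ℝ :=
  fun I => (I 1) ^ 5 / 5 + (I 0) ^ 3 / 3 - (I 0) ^ 2 / 2
    + (I 0) * (I 1) / 2 - (I 2) ^ 2 / 2 - I 3

open scoped Polynomial Nat

theorem Polynomial.iteratedDeriv_eval {𝕜 : Type*} [NontriviallyNormedField 𝕜] (p : 𝕜[X])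
    (n : ℕ) (x : 𝕜) :
    iteratedDeriv n (fun t => p.eval t) x = (derivative^[n] p).eval x := by
  induction n generalizing p with
  | zero => simp
  | succ n ih =>
    have hderiv : _root_.deriv (fun t => p.eval t) = fun t => (derivative p).eval t := by
      funext t; exact p.deriv
    rw [iteratedDeriv_succ', hderiv, ih, Function.iterate_succ_apply]

theorem Polynomial.iteratedDeriv_eval_zero {𝕜 : Type*} [NontriviallyNormedField 𝕜] (p : 𝕜[X])
    (n : ℕ) : iteratedDeriv n (fun t => p.eval t) 0 = n ! * p.coeff n := by
  rw [p.iteratedDeriv_eval, ← coeff_zero_eq_eval_zero, coeff_iterate_derivative, zero_add,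
    Nat.descFactorial_self, nsmul_eq_mul]

theorem iteratedFDeriv_apply_const_eq_iteratedDeriv {𝕜 E F : Type*} [NontriviallyNormedField 𝕜]
    [NormedAddCommGroup E] [NormedSpace 𝕜 E] [NormedAddCommGroup F] [NormedSpace 𝕜 F]
    {f : E → F} {N : WithTop ℕ∞} (hf : ContDiff 𝕜 N f) {n : ℕ} (hn : n ≤ N) (x v : E) :
    iteratedFDeriv 𝕜 n f x (fun _ => v) = iteratedDeriv n (fun t : 𝕜 => f (x + t • v)) 0 := by
  have hshift : ContDiff 𝕜 N fun z => f (x + z) := hf.comp (contDiff_const.add contDiff_id)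
  have hline : (fun t : 𝕜 => f (x + t • v)) =
      (fun z => f (x + z)) ∘ ContinuousLinearMap.smulRight (1 : 𝕜 →L[𝕜] 𝕜) v := by
    funext t; simp
  rw [iteratedDeriv_eq_iteratedFDeriv, hline,
    ContinuousLinearMap.iteratedFDeriv_comp_right _ hshift _ hn, iteratedFDeriv_comp_add_left]
  simp

open Polynomial in
noncomputable def hLine (v : Fin 4 → ℝ) : ℝ[X] :=
  C (v 1 ^ 5 / 5) * X ^ 5 + C (v 0 ^ 3 / 3) * X ^ 3
    + C (v 0 * v 1 / 2 - v 0 ^ 2 / 2 - v 2 ^ 2 / 2) * X ^ 2 - C (v 3) * X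

section hLine

open Polynomial

variable (v : Fin 4 → ℝ)

theorem hLine_coeff_one : (hLine v).coeff 1 = -v 3 := by
  simp [hLine, coeff_C_mul, -map_sub]

theorem hLine_coeff_two : (hLine v).coeff 2 = v 0 * v 1 / 2 - v 0 ^ 2 / 2 - v 2 ^ 2 / 2 := by
  simp [hLine, coeff_C_mul, -map_sub]

theorem hLine_coeff_three : (hLine v).coeff 3 = v 0 ^ 3 / 3 := by
  simp [hLine, coeff_C_mul, -map_sub]

theorem hLine_coeff_five : (hLine v).coeff 5 = v 1 ^ 5 / 5 := by
  simp [hLine, coeff_C_mul, -map_sub]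

theorem h_smul_eq_eval_hLine (t : ℝ) : h (t • v) = (hLine v).eval t := by
  simp only [h, hLine, Pi.smul_apply, smul_eq_mul, eval_add, eval_sub, eval_mul, eval_C,
    eval_pow, eval_X]
  ring

end hLine

theorem contDiff_h : ContDiff ℝ ⊤ h := by
  unfold h
  fun_prop

theorem iteratedFDeriv_h_zero_apply_const (n : ℕ) (v : Fin 4 → ℝ) :
    iteratedFDeriv ℝ n h 0 (fun _ => v) = n ! * (hLine v).coeff n := by
  rw [iteratedFDeriv_apply_const_eq_iteratedDeriv contDiff_h (by exact_mod_cast le_top)]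
  simp only [zero_add, h_smul_eq_eval_hLine, Polynomial.iteratedDeriv_eval_zero]

theorem fderiv_h_zero_apply (v : Fin 4 → ℝ) : fderiv ℝ h 0 v = -v 3 := by
  simpa [hLine_coeff_one] using iteratedFDeriv_h_zero_apply_const 1 v

/-- `h` has non-zero gradient at the origin and is five-jet non-degenerate there. -/
theorem h_five_jet_nondegenerate :
    fderiv ℝ h 0 ≠ 0 ∧
    ∀ v : Fin 4 → ℝ,
      fderiv ℝ h 0 v = 0 →
      iteratedFDeriv ℝ 2 h 0 ![v, v] = 0 →
      iteratedFDeriv ℝ 3 h 0 ![v, v, v] = 0 →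
      iteratedFDeriv ℝ 4 h 0 ![v, v, v, v] = 0 →
      iteratedFDeriv ℝ 5 h 0 ![v, v, v, v, v] = 0 →
      v = 0 := by
  refine ⟨fun hzero => by simpa [fderiv_h_zero_apply] using congr($hzero (Pi.single 3 1)), ?_⟩
  intro v h1 h2 h3 _ h5
  simp only [Matrix.vec_single_eq_const, Matrix.vecCons_const, iteratedFDeriv_h_zero_apply_const,
    hLine_coeff_two, hLine_coeff_three, hLine_coeff_five, fderiv_h_zero_apply] at h1 h2 h3 h5
  have hv0 : v 0 = 0 := by simpa [Nat.factorial_ne_zero] using h3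
  have hv1 : v 1 = 0 := by simpa [Nat.factorial_ne_zero] using h5
  have hv2 : v 2 = 0 := by simpa [hv0] using h2
  have hv3 : v 3 = 0 := neg_eq_zero.mp h1
  ext i
  fin_cases i <;> assumption
end

section
/- Let h(I₁,I₂,I₃,I₄) = I₂⁵/5 + I₁³/3 − I₁²/2 + I₁I₂/2 − I₃²/2 − I₄ and v = (0, v₂, 0, 0) with v₂ ≠ 0. Then any pair (u, w) of vectors in ℝ⁴ satisfying (at the origin) h¹[u] = 0, h¹[w] = 0, h²[u,v] = 0, h²[w,v] = 0 must satisfy rank(u, v, w) < 3. -/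
open ContinuousLinearMap Module Submodule

theorem not_linearIndependent_of_forall_mem {K V ι : Type*} [DivisionRing K] [AddCommGroup V]
    [Module K V] [Fintype ι] {W : Submodule K V} [FiniteDimensional K W]
    (hW : finrank K W < Fintype.card ι) {f : ι → V} (hf : ∀ i, f i ∈ W) :
    ¬ LinearIndependent K f := fun hf_li => by
  have := Submodule.finrank_mono (span_le.2 (Set.range_subset_iff.2 hf))
  rw [finrank_span_eq_card hf_li] at this
  omega

theorem mem_span_single_one_two {x : Fin 4 → ℝ} (h0 : x 0 = 0) (h3 : x 3 = 0) :
    x ∈ span ℝ (Set.range ![Pi.single 1 1, Pi.single 2 1]) :=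
  (mem_span_range_iff_exists_fun ℝ).2
    ⟨![x 1, x 2], by ext i; fin_cases i <;> simp [h0, h3]⟩

theorem finrank_span_single_one_two_lt_three :
    finrank ℝ (span ℝ (Set.range ![(Pi.single 1 1 : Fin 4 → ℝ), Pi.single 2 1])) < 3 :=
  (finrank_range_le_card _).trans_lt (by simp)

noncomputable def hDeriv (x : Fin 4 → ℝ) : (Fin 4 → ℝ) →L[ℝ] ℝ :=
  (x 0 ^ 2 - x 0 + x 1 / 2) • proj 0 + (x 1 ^ 4 + x 0 / 2) • proj 1 - x 2 • proj 2 - proj 3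

theorem hasFDerivAt_h (x : Fin 4 → ℝ) : HasFDerivAt h (hDeriv x) x := by
  have e (i : Fin 4) := hasFDerivAt_apply (𝕜 := ℝ) (F' := fun _ : Fin 4 => ℝ) i x
  refine ((((((((e 1).pow 5).mul_const (1 / 5)).add (((e 0).pow 3).mul_const (1 / 3))).sub
    (((e 0).pow 2).mul_const (1 / 2))).add (((e 0).mul (e 1)).mul_const (1 / 2))).sub
    (((e 2).pow 2).mul_const (1 / 2))).sub (e 3)).congr_fderiv ?_ |>.congr_of_eventuallyEq
    (.of_forall fun y => ?_)
  · ext a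
    simp only [hDeriv, add_apply, sub_apply, smul_apply, proj_apply, smul_eq_mul, nsmul_eq_mul]
    push_cast
    ring
  · simp only [h, Pi.add_apply, Pi.sub_apply, Pi.mul_apply]; ring

theorem fderiv_h : fderiv ℝ h = hDeriv := funext fun x => (hasFDerivAt_h x).fderiv

theorem fderiv_h_apply (x a : Fin 4 → ℝ) :
    fderiv ℝ h x a =
      (x 0 ^ 2 - x 0 + x 1 / 2) * a 0 + (x 1 ^ 4 + x 0 / 2) * a 1 - x 2 * a 2 - a 3 := by
  simp [fderiv_h, hDeriv]

theorem iteratedFDeriv_two_h_apply (x a b : Fin 4 → ℝ) :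
    iteratedFDeriv ℝ 2 h x ![a, b] =
      (2 * x 0 - 1) * a 0 * b 0 + (a 0 * b 1 + a 1 * b 0) / 2 + 4 * x 1 ^ 3 * a 1 * b 1
        - a 2 * b 2 := by
  have e (i : Fin 4) := hasFDerivAt_apply (𝕜 := ℝ) (F' := fun _ : Fin 4 => ℝ) i x
  have hd := ((((((e 0).pow 2).sub (e 0)).add ((e 1).mul_const (1 / 2))).smul_const (proj 0)).add
      ((((e 1).pow 4).add ((e 0).mul_const (1 / 2))).smul_const (proj 1))).sub
      ((e 2).smul_const (proj 2)) |>.sub (hasFDerivAt_const (proj 3 : (Fin 4 → ℝ) →L[ℝ] ℝ) x)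
  rw [iteratedFDeriv_two_apply, fderiv_h,
    (hd.congr_of_eventuallyEq (.of_forall fun y => ?_)).fderiv]
  · simp only [Matrix.cons_val_zero, Matrix.cons_val_one, add_apply, sub_apply, smulRight_apply,
      smul_apply, proj_apply, smul_eq_mul, nsmul_eq_mul, zero_apply]
    push_cast
    ring
  · simp only [hDeriv, Pi.add_apply, Pi.sub_apply, div_eq_mul_inv, one_mul]

/-- For `v = (0, v₂, 0, 0)` with `v₂ ≠ 0`, any pair `(u, w)` solving the system (5)
of the paper at the origin satisfies `rank(u, v, w) < 3`. -/
theorem rank_lt_three_of_system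
    (v₂ : ℝ) (hv₂ : v₂ ≠ 0) (v : Fin 4 → ℝ) (hv : v = ![0, v₂, 0, 0])
    (u w : Fin 4 → ℝ)
    (h1 : fderiv ℝ h 0 u = 0)
    (h2 : fderiv ℝ h 0 w = 0)
    (h3 : iteratedFDeriv ℝ 2 h 0 ![u, v] = 0)
    (h4 : iteratedFDeriv ℝ 2 h 0 ![w, v] = 0) :
    ¬ LinearIndependent ℝ ![u, v, w] := by
  subst hv
  have hu3 : u 3 = 0 := by simpa [fderiv_h_apply] using h1
  have hw3 : w 3 = 0 := by simpa [fderiv_h_apply] using h2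
  have hu0 : u 0 = 0 := by simpa [iteratedFDeriv_two_h_apply, hv₂] using h3
  have hw0 : w 0 = 0 := by simpa [iteratedFDeriv_two_h_apply, hv₂] using h4
  refine not_linearIndependent_of_forall_mem finrank_span_single_one_two_lt_three fun i => ?_
  fin_cases i
  · exact mem_span_single_one_two hu0 hu3
  · exact mem_span_single_one_two rfl rfl
  · exact mem_span_single_one_two hw0 hw3
end
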